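/- Let ω > 0, k ≥ 0 and M ≥ 0. Let Λ : [0,∞) → [0,∞) be absolutely continuous on every compact subinterval of [0,∞), and let h : [0,∞) → [0,∞) be measurable with ∫_0^∞ h(τ)² dτ ≤ M. If Λ'(t) + ωΛ(t) ≤ h(t)Λ(t) + k for almost every t ≥ 0, then for all t ≥ 0 one has Λ(t) ≤ Λ(0) e^{M/(2ω)} e^{−ωt/2} + (2k/ω) e^{M/(2ω)}. -/

import Mathlib

/-!
By AM–GM, `h ≤ ω / 2 + h ^ 2 / (2 ω)`, so `∫ₛᵗ h ≤ (ω / 2) (t - s) + M / (2 ω)`. The differential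
inequality says `Λ' ≤ (h - ω) Λ + k`; multiplying by the absolutely continuous integrating factor
`exp (-∫₀ˣ (h - ω))` and integrating gives the linear Grönwall bound
`Λ t ≤ Λ 0 exp (∫₀ᵗ (h - ω)) + k ∫₀ᵗ exp (∫ₛᵗ (h - ω)) ds`, in which every exponent is at most
`M / (2 ω) - (ω / 2) (t - s)`.
-/

open MeasureTheory Set

theorem LipschitzOnWith.comp_absolutelyContinuousOnInterval {X Y : Type*} [PseudoMetricSpace X]
    [PseudoMetricSpace Y] {f : X → Y} {g : ℝ → X} {K : NNReal} {s : Set X} {a b : ℝ}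
    (hf : LipschitzOnWith K f s) (hg : AbsolutelyContinuousOnInterval g a b)
    (hgs : MapsTo g (uIcc a b) s) :
    AbsolutelyContinuousOnInterval (f ∘ g) a b := by
  rw [absolutelyContinuousOnInterval_iff] at hg ⊢
  intro ε hε
  obtain ⟨δ, hδ, hgδ⟩ := hg (ε / (K + 1)) (by positivity)
  refine ⟨δ, hδ, fun E hE hEδ => ?_⟩
  calc ∑ i ∈ Finset.range E.1, dist (f (g (E.2 i).1)) (f (g (E.2 i).2))
      ≤ ∑ i ∈ Finset.range E.1, K * dist (g (E.2 i).1) (g (E.2 i).2) :=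
        Finset.sum_le_sum fun i hi =>
          hf.dist_le_mul _ (hgs (hE.1 i hi).1) _ (hgs (hE.1 i hi).2)
    _ ≤ (K + 1) * ∑ i ∈ Finset.range E.1, dist (g (E.2 i).1) (g (E.2 i).2) := by
        rw [Finset.mul_sum]
        gcongr
        linarith
    _ < (K + 1) * (ε / (K + 1)) := by gcongr; exact hgδ E hE hEδ
    _ = ε := by field_simp

theorem ContDiff.comp_absolutelyContinuousOnInterval {f g : ℝ → ℝ} {a b : ℝ}
    (hf : ContDiff ℝ 1 f) (hg : AbsolutelyContinuousOnInterval g a b) :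
    AbsolutelyContinuousOnInterval (fun x => f (g x)) a b := by
  obtain ⟨C, hC⟩ := hg.exists_bound
  obtain ⟨K, hK⟩ := hf.contDiffOn.exists_lipschitzOnWith one_ne_zero (convex_Icc (-C) C)
    isCompact_Icc
  exact hK.comp_absolutelyContinuousOnInterval hg fun x hx => abs_le.1 (hC x hx)

theorem integral_exp_sub_mul_sub_le {c C k a b : ℝ} (hc : 0 < c) (hk : 0 ≤ k) :
    ∫ s in a..b, Real.exp (C - c * (b - s)) * k ≤ k / c * Real.exp C := by
  have hderiv : ∀ s ∈ uIcc a b, HasDerivAt (fun s => k / c * Real.exp (C - c * (b - s)))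
      (Real.exp (C - c * (b - s)) * k) s := fun s _ =>
    ((((hasDerivAt_id s).const_sub b).const_mul c).const_sub C).exp.const_mul (k / c)
      |>.congr_deriv (by simp only [id]; field_simp)
  rw [intervalIntegral.integral_eq_sub_of_hasDerivAt hderiv
    (Continuous.intervalIntegrable (by fun_prop) a b)]
  have : 0 ≤ k / c * Real.exp (C - c * (b - a)) := by positivity
  simp only [sub_self, mul_zero, sub_zero]
  linarith

theorem IntervalIntegrable.of_sq {h : ℝ → ℝ} {a b : ℝ} (hab : a ≤ b)
    (hh : AEStronglyMeasurable h volume) (hh2 : IntervalIntegrable (fun x => h x ^ 2) volume a b) :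
    IntervalIntegrable h volume a b := by
  rw [intervalIntegrable_iff_integrableOn_Ioc_of_le hab] at hh2 ⊢
  exact ((memLp_two_iff_integrable_sq hh.restrict).2 hh2).integrable one_le_two

theorem intervalIntegral.integral_le_mul_add_integral_sq_div {h : ℝ → ℝ} {ω s t : ℝ}
    (hω : 0 < ω) (hst : s ≤ t) (hh : IntervalIntegrable h volume s t)
    (hh2 : IntervalIntegrable (fun x => h x ^ 2) volume s t) :
    ∫ x in s..t, h x ≤ ω / 2 * (t - s) + (∫ x in s..t, h x ^ 2) / (2 * ω) := by
  have hamgm : ∀ x, h x ≤ ω / 2 + h x ^ 2 / (2 * ω) := fun x => by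
    rw [div_add_div _ _ two_ne_zero (by positivity), le_div_iff₀ (by positivity)]
    nlinarith [sq_nonneg (h x - ω)]
  calc ∫ x in s..t, h x ≤ ∫ x in s..t, (ω / 2 + h x ^ 2 / (2 * ω)) :=
        integral_mono_on hst hh (intervalIntegrable_const.add (hh2.div_const _))
          fun x _ => hamgm x
    _ = ω / 2 * (t - s) + (∫ x in s..t, h x ^ 2) / (2 * ω) := by
        rw [integral_add intervalIntegrable_const (hh2.div_const _), integral_const,
          integral_div, smul_eq_mul, mul_comm]

namespace AbsolutelyContinuousOnInterval

variable {u β γ : ℝ → ℝ} {a b : ℝ}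

theorem integral_deriv_mul_exp_neg_integral_le (hab : a ≤ b)
    (hu : AbsolutelyContinuousOnInterval u a b) (hβ : IntervalIntegrable β volume a b)
    (hγ : IntervalIntegrable γ volume a b)
    (hu' : ∀ᵐ x, x ∈ Icc a b → deriv u x ≤ β x * u x + γ x) :
    u b * Real.exp (-∫ x in a..b, β x) - u a
      ≤ ∫ s in a..b, Real.exp (-∫ x in a..s, β x) * γ s := by
  set E : ℝ → ℝ := fun s => Real.exp (-∫ x in a..s, β x)
  have hE : AbsolutelyContinuousOnInterval E a b :=
    Real.contDiff_exp.comp_absolutelyContinuousOnInterval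
      (hβ.absolutelyContinuousOnInterval_intervalIntegral left_mem_uIcc).fun_neg
  have hE' : ∀ᵐ x, x ∈ uIcc a b → deriv E x = -β x * E x := by
    filter_upwards [hβ.ae_hasDerivAt_integral] with x hx hxab
    exact ((hx hxab a left_mem_uIcc).neg.exp.deriv).trans (mul_comm _ _)
  have hEa : E a = 1 := by simp [E]
  rw [← mul_one (u a), ← hEa, ← hu.integral_deriv_mul_eq_sub hE]
  refine intervalIntegral.integral_mono_ae_restrict hab
    ((hu.intervalIntegrable_deriv.mul_continuousOn hE.continuousOn).add
      (hE.intervalIntegrable_deriv.continuousOn_mul hu.continuousOn))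
    (hγ.continuousOn_mul hE.continuousOn) ?_
  rw [Filter.EventuallyLE, ae_restrict_iff' measurableSet_Icc]
  filter_upwards [hu', hE'] with x hux hEx hx
  rw [hEx (Icc_subset_uIcc hx)]
  have := mul_le_mul_of_nonneg_right (hux hx) (Real.exp_pos (-∫ y in a..x, β y)).le
  linarith

theorem le_mul_exp_integral_add_integral (hab : a ≤ b)
    (hu : AbsolutelyContinuousOnInterval u a b) (hβ : IntervalIntegrable β volume a b)
    (hγ : IntervalIntegrable γ volume a b)
    (hu' : ∀ᵐ x, x ∈ Icc a b → deriv u x ≤ β x * u x + γ x) :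
    u b ≤ u a * Real.exp (∫ x in a..b, β x) + ∫ s in a..b, Real.exp (∫ x in s..b, β x) * γ s := by
  have key := integral_deriv_mul_exp_neg_integral_le hab hu hβ hγ hu'
  have hweight : ∫ s in a..b, Real.exp (∫ x in s..b, β x) * γ s
      = Real.exp (∫ x in a..b, β x) * ∫ s in a..b, Real.exp (-∫ x in a..s, β x) * γ s := by
    rw [← intervalIntegral.integral_const_mul]
    refine intervalIntegral.integral_congr fun s hs => ?_
    rw [uIcc_of_le hab] at hs
    rw [← intervalIntegral.integral_interval_sub_left hβ (hβ.mono_set (by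
      rw [uIcc_of_le hab, uIcc_of_le hs.1]; exact Icc_subset_Icc_right hs.2)),
      sub_eq_add_neg, Real.exp_add, mul_assoc]
  have hinv : Real.exp (∫ x in a..b, β x) * Real.exp (-∫ x in a..b, β x) = 1 := by
    rw [← Real.exp_add, add_neg_cancel, Real.exp_zero]
  rw [hweight]
  linear_combination
    mul_le_mul_of_nonneg_left key (Real.exp_pos (∫ x in a..b, β x)).le - u b * hinv

theorem le_of_deriv_add_mul_le_of_integral_le {Λ h : ℝ → ℝ} {ω η C k : ℝ} (hab : a ≤ b)
    (hη : η < ω) (hk : 0 ≤ k) (hΛ : AbsolutelyContinuousOnInterval Λ a b) (hΛa : 0 ≤ Λ a)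
    (hh : IntervalIntegrable h volume a b)
    (hΛ' : ∀ᵐ x, x ∈ Icc a b → deriv Λ x + ω * Λ x ≤ h x * Λ x + k)
    (hhC : ∀ s ∈ Icc a b, ∫ x in s..b, h x ≤ η * (b - s) + C) :
    Λ b ≤ Λ a * Real.exp C * Real.exp (-(ω - η) * (b - a)) + k / (ω - η) * Real.exp C := by
  have hβ : IntervalIntegrable (fun x => h x - ω) volume a b := hh.sub intervalIntegrable_const
  have hgron := hΛ.le_mul_exp_integral_add_integral hab hβ (intervalIntegrable_const (c := k))
    (by filter_upwards [hΛ'] with x hx hxab using by linarith [hx hxab])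
  have hβC : ∀ s ∈ Icc a b, ∫ x in s..b, (h x - ω) ≤ C - (ω - η) * (b - s) := by
    intro s hs
    rw [intervalIntegral.integral_sub (hh.mono_set (uIcc_subset_uIcc_right (Icc_subset_uIcc hs)))
      intervalIntegrable_const, intervalIntegral.integral_const, smul_eq_mul]
    linarith [hhC s hs]
  have hfirst : Λ a * Real.exp (∫ x in a..b, (h x - ω))
      ≤ Λ a * Real.exp C * Real.exp (-(ω - η) * (b - a)) := by
    rw [mul_assoc, ← Real.exp_add]
    gcongr
    linarith [hβC a (left_mem_Icc.2 hab)]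
  have hsecond : ∫ s in a..b, Real.exp (∫ x in s..b, (h x - ω)) * k
      ≤ ∫ s in a..b, Real.exp (C - (ω - η) * (b - s)) * k := by
    refine intervalIntegral.integral_mono_on hab ?_
      (Continuous.intervalIntegrable (by fun_prop) a b) fun s hs =>
        mul_le_mul_of_nonneg_right (Real.exp_le_exp.2 (hβC s hs)) hk
    refine ContinuousOn.intervalIntegrable (ContinuousOn.mul ?_ continuousOn_const)
    exact (intervalIntegral.continuousOn_primitive_interval_left
      ((intervalIntegrable_iff' (μ := volume)).1 hβ)).rexp
  linarith [integral_exp_sub_mul_sub_le (C := C) (a := a) (b := b) (sub_pos.2 hη) hk]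

end AbsolutelyContinuousOnInterval

/-- Absolute continuity of `Λ` on compact subintervals of `[0,∞)` is encoded by a locally
integrable `Λ'` with `Λ t = Λ 0 + ∫₀ᵗ Λ'`. -/
theorem gronwall_type_inequality_square_integrable_coefficient_general
    (ω k M : ℝ) (hω : 0 < ω) (hk : 0 ≤ k)
    (Λ Λ' h : ℝ → ℝ)
    (hΛnonneg : ∀ t, 0 ≤ t → 0 ≤ Λ t)
    (hΛ'int : ∀ t, 0 ≤ t → IntervalIntegrable Λ' volume 0 t)
    (hΛFTC : ∀ t, 0 ≤ t → Λ t = Λ 0 + ∫ s in (0:ℝ)..t, Λ' s)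
    (hhmeas : Measurable h)
    (hhint : IntegrableOn (fun τ => (h τ) ^ 2) (Set.Ici (0:ℝ)) volume)
    (hhM : (∫ τ in Set.Ici (0:ℝ), (h τ) ^ 2) ≤ M)
    (hineq : ∀ᵐ t ∂(volume.restrict (Set.Ici (0:ℝ))),
      Λ' t + ω * Λ t ≤ h t * Λ t + k) :
    ∀ t, 0 ≤ t →
      Λ t ≤ Λ 0 * Real.exp (M / (2 * ω)) * Real.exp (-ω * t / 2)
        + (2 * k / ω) * Real.exp (M / (2 * ω)) := by
  intro t ht
  set F : ℝ → ℝ := fun x => Λ 0 + ∫ s in (0:ℝ)..x, Λ' s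
  have hFΛ : ∀ x ∈ Icc 0 t, F x = Λ x := fun x hx => (hΛFTC x hx.1).symm
  have hF : AbsolutelyContinuousOnInterval F 0 t :=
    contDiffOn_const.absolutelyContinuousOnInterval.fun_add
      ((hΛ'int t ht).absolutelyContinuousOnInterval_intervalIntegral left_mem_uIcc)
  have hF' : ∀ᵐ x, x ∈ Icc 0 t → deriv F x + ω * F x ≤ h x * F x + k := by
    filter_upwards [(hΛ'int t ht).ae_hasDerivAt_integral,
      (ae_restrict_iff' measurableSet_Ici).1 hineq] with x hderiv hx hxt
    rw [((hderiv (Icc_subset_uIcc hxt) 0 left_mem_uIcc).const_add (Λ 0)).deriv, hFΛ x hxt]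
    exact hx hxt.1
  have hh2 : ∀ s ∈ Icc 0 t, IntervalIntegrable (fun x => h x ^ 2) volume s t := fun s hs =>
    (intervalIntegrable_iff_integrableOn_Ioc_of_le hs.2).2
      (hhint.mono_set fun x hx => hs.1.trans hx.1.le)
  have hh : ∀ s ∈ Icc 0 t, IntervalIntegrable h volume s t := fun s hs =>
    (hh2 s hs).of_sq hs.2 hhmeas.aestronglyMeasurable
  have hhC : ∀ s ∈ Icc 0 t, ∫ x in s..t, h x ≤ ω / 2 * (t - s) + M / (2 * ω) := by
    intro s hs
    refine (intervalIntegral.integral_le_mul_add_integral_sq_div hω hs.2 (hh s hs)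
      (hh2 s hs)).trans ?_
    gcongr
    rw [intervalIntegral.integral_of_le hs.2]
    exact (setIntegral_mono_set hhint (ae_of_all _ fun x => sq_nonneg (h x))
      (show Ioc s t ⊆ Ici 0 from fun x hx => hs.1.trans hx.1.le).eventuallyLE).trans hhM
  have hbound := hF.le_of_deriv_add_mul_le_of_integral_le ht (half_lt_self hω) hk
    (hFΛ 0 (left_mem_Icc.2 ht) ▸ hΛnonneg 0 le_rfl) (hh 0 (left_mem_Icc.2 ht)) hF' hhC
  rw [hFΛ t (right_mem_Icc.2 ht), hFΛ 0 (left_mem_Icc.2 ht)] at hbound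
  convert hbound using 3
  · ring_nf
  · field_simp
    ring

/-- Grönwall-type inequality with a square-integrable multiplicative coefficient
(used in the proof of the uniform compactness of the operators `K_ε`).
Absolute continuity of `Λ` on compact subintervals of `[0,∞)` is encoded through the
existence of an a.e. derivative `Λ'` which is locally integrable and for which the
fundamental theorem of calculus representation holds. -/
theorem gronwall_type_inequality_square_integrable_coefficient
    (ω k M : ℝ) (hω : 0 < ω) (hk : 0 ≤ k) (hM : 0 ≤ M)
    (Λ Λ' h : ℝ → ℝ)
    (hΛnonneg : ∀ t, 0 ≤ t → 0 ≤ Λ t)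
    (hΛ'int : ∀ t, 0 ≤ t → IntervalIntegrable Λ' volume 0 t)
    (hΛderiv : ∀ᵐ t ∂(volume.restrict (Set.Ici (0:ℝ))), HasDerivAt Λ (Λ' t) t)
    (hΛFTC : ∀ t, 0 ≤ t → Λ t = Λ 0 + ∫ s in (0:ℝ)..t, Λ' s)
    (hhnonneg : ∀ t, 0 ≤ t → 0 ≤ h t)
    (hhmeas : Measurable h)
    (hhint : IntegrableOn (fun τ => (h τ) ^ 2) (Set.Ici (0:ℝ)) volume)
    (hhM : (∫ τ in Set.Ici (0:ℝ), (h τ) ^ 2) ≤ M)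
    (hineq : ∀ᵐ t ∂(volume.restrict (Set.Ici (0:ℝ))),
      Λ' t + ω * Λ t ≤ h t * Λ t + k) :
    ∀ t, 0 ≤ t →
      Λ t ≤ Λ 0 * Real.exp (M / (2 * ω)) * Real.exp (-ω * t / 2)
        + (2 * k / ω) * Real.exp (M / (2 * ω)) :=
  gronwall_type_inequality_square_integrable_coefficient_general ω k M hω hk Λ Λ' h hΛnonneg hΛ'int
    hΛFTC hhmeas hhint hhM hineq
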